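/- arXiv:math/0106251 — 2 statements merged into one kernel-verified Lean document; each statement's English description precedes it below -/
import Mathlib

section
/- Let A be an element of SL(2, ℝ) with |tr A| > 2, acting on the upper half-plane ℍ by Möbius transformations. Then the infimum over z ∈ ℍ of the hyperbolic distance dist(z, A • z) is equal to 2·arcosh(|tr A| / 2). (Equivalently, the translation length ℓ of the hyperbolic isometry A satisfies 2·cosh(ℓ/2) = |tr A|; this is the relation used to compute lengths of closed geodesics on quotients of ℍ from traces of matrices.) -/
/-!
For `A = !![a, b; c, d]` and `z = x + iy`, one has `|z - A • z| * |cz + d| = |cz² + (d - a)z - b|`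
and `Im (A • z) = y / |cz + d|²`, while `ad - bc = 1` gives
`|cz² + (d - a)z - b|² = (c|z|² + (d - a)x - b)² + ((a + d)² - 4) y²`. Hence
`cosh (dist z (A • z)) = (tr A)² / 2 - 1 + (c|z|² + (d - a)x - b)² / (2y²)`,
which is at least `(tr A)² / 2 - 1 = cosh (2 arcosh (|tr A| / 2))`, with equality exactly on
the axis `c|z|² + (d - a)x - b = 0` of `A`; this axis meets `ℍ` when `|tr A| > 2`.
-/

open scoped UpperHalfPlane MatrixGroups

/-- arcosh x = log(x + √(x² − 1)), the inverse hyperbolic cosine. -/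
noncomputable def arcosh (x : ℝ) : ℝ := Real.log (x + Real.sqrt (x ^ 2 - 1))

lemma Real.cosh_two_mul_arcosh {x : ℝ} (hx : 1 ≤ x) :
    Real.cosh (2 * Real.arcosh x) = 2 * x ^ 2 - 1 := by
  rw [Real.cosh_two_mul, Real.cosh_arcosh hx, Real.sinh_arcosh hx, Real.sq_sqrt (by nlinarith)]
  ring

lemma normSq_fixedPoint_quadratic {a b c d : ℝ} (hdet : a * d - b * c = 1) (z : ℂ) :
    Complex.normSq (c * z ^ 2 + (d - a) * z - b)
      = (c * Complex.normSq z + (d - a) * z.re - b) ^ 2 + ((a + d) ^ 2 - 4) * z.im ^ 2 := by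
  simp only [Complex.normSq_apply, Complex.mul_re, Complex.mul_im, Complex.sub_re,
    Complex.sub_im, Complex.add_re, Complex.add_im, sq, Complex.ofReal_re, Complex.ofReal_im]
  linear_combination (-4 * z.im ^ 2) * hdet

namespace UpperHalfPlane

lemma cosh_dist_smul_eq_normSq (A : SL(2, ℝ)) (z : ℍ) :
    Real.cosh (dist z (A • z)) =
      1 + Complex.normSq (A 1 0 * (z : ℂ) ^ 2 + (A 1 1 - A 0 0) * z - A 0 1) / (2 * z.im ^ 2) := by
  have hdenom : (A 1 0 * z + A 1 1 : ℂ) ≠ 0 :=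
    denom_ne_zero (Matrix.SpecialLinearGroup.mapGL ℝ A) z
  have hcoe : (↑(A • z) : ℂ) = (A 0 0 * z + A 0 1) / (A 1 0 * z + A 1 1) := by
    simp [coe_specialLinearGroup_apply]
  have him : (A • z).im = z.im / Complex.normSq (A 1 0 * z + A 1 1) := by
    rw [show A • z = Matrix.SpecialLinearGroup.mapGL ℝ A • z from rfl, im_smul_eq_div_normSq]
    simp [denom]
  have hsub : (z : ℂ) - ↑(A • z) =
      (A 1 0 * (z : ℂ) ^ 2 + (A 1 1 - A 0 0) * z - A 0 1) / (A 1 0 * z + A 1 1) := by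
    rw [eq_div_iff hdenom, hcoe, sub_mul, div_mul_cancel₀ _ hdenom]
    ring
  rw [cosh_dist, dist_eq_norm, hsub, him, norm_div, div_pow, ← Complex.normSq_eq_norm_sq,
    ← Complex.normSq_eq_norm_sq]
  have := Complex.normSq_pos.2 hdenom
  have := z.im_pos
  field_simp

/-- For hyperbolic `A`, the zero set of `axisForm A` is the axis of `A`: the geodesic joining the
two fixed points of `A` on `ℝ`. -/
noncomputable def axisForm (A : SL(2, ℝ)) (z : ℍ) : ℝ :=
  A 1 0 * Complex.normSq (z : ℂ) + (A 1 1 - A 0 0) * z.re - A 0 1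

lemma cosh_dist_smul_eq_axisForm (A : SL(2, ℝ)) (z : ℍ) :
    Real.cosh (dist z (A • z)) =
      (A : Matrix (Fin 2) (Fin 2) ℝ).trace ^ 2 / 2 - 1 + axisForm A z ^ 2 / (2 * z.im ^ 2) := by
  have hdet := (Matrix.det_fin_two (A : Matrix (Fin 2) (Fin 2) ℝ)).symm.trans A.det_coe
  rw [cosh_dist_smul_eq_normSq, normSq_fixedPoint_quadratic hdet, Matrix.trace_fin_two,
    axisForm, coe_re, coe_im]
  have := z.im_pos
  field_simp
  ring

lemma exists_axisForm_eq_zero (A : SL(2, ℝ))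
    (hA : 4 < (A : Matrix (Fin 2) (Fin 2) ℝ).trace ^ 2) : ∃ z : ℍ, axisForm A z = 0 := by
  have hdet := (Matrix.det_fin_two (A : Matrix (Fin 2) (Fin 2) ℝ)).symm.trans A.det_coe
  rw [Matrix.trace_fin_two] at hA
  by_cases hc : A 1 0 = 0
  · have hda : A 1 1 - A 0 0 ≠ 0 := by
      intro h
      rw [hc] at hdet
      have : (A 0 0 + A 1 1) ^ 2 = 4 := by linear_combination (A 1 1 - A 0 0) * h + 4 * hdet
      linarith
    -- the axis is the vertical line `x = b / (d - a)`
    refine ⟨mk ⟨A 0 1 / (A 1 1 - A 0 0), 1⟩ one_pos, ?_⟩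
    simp only [axisForm, hc, mk_re, zero_mul, zero_add]
    field_simp
    ring
  · set s := Real.sqrt ((A 0 0 + A 1 1) ^ 2 - 4)
    have hs : s ^ 2 = (A 0 0 + A 1 1) ^ 2 - 4 := Real.sq_sqrt (by linarith)
    have hs0 : 0 < s := Real.sqrt_pos.2 (by linarith)
    -- the top of the axis, a semicircle centred at `(a - d) / (2c)` of radius `s / (2|c|)`
    refine ⟨mk ⟨(A 0 0 - A 1 1) / (2 * A 1 0), s / (2 * |A 1 0|)⟩ (by positivity), ?_⟩
    simp only [axisForm, mk_re, Complex.normSq_mk, ← sq, div_pow, mul_pow, sq_abs, hs]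
    field_simp
    linear_combination 4 * hdet

end UpperHalfPlane

/-- For A ∈ SL(2, ℝ) with |tr A| > 2 acting on the upper half-plane ℍ,
the infimum over z ∈ ℍ of the hyperbolic distance dist(z, A • z) equals
2·arcosh(|tr A| / 2). -/
theorem translation_length_eq_two_arcosh_half_trace
    (A : Matrix.SpecialLinearGroup (Fin 2) ℝ)
    (h : 2 < |Matrix.trace (A : Matrix (Fin 2) (Fin 2) ℝ)|) :
    (⨅ z : ℍ, dist z (A • z))
      = 2 * arcosh (|Matrix.trace (A : Matrix (Fin 2) (Fin 2) ℝ)| / 2) := by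
  change _ = 2 * Real.arcosh _
  set t := Matrix.trace (A : Matrix (Fin 2) (Fin 2) ℝ)
  have ht : 1 ≤ |t| / 2 := by linarith
  have hcosh : Real.cosh (2 * Real.arcosh (|t| / 2)) = t ^ 2 / 2 - 1 := by
    rw [Real.cosh_two_mul_arcosh ht, div_pow, sq_abs]
    ring
  have hnonneg : 0 ≤ 2 * Real.arcosh (|t| / 2) := by
    have := Real.arcosh_nonneg ht
    positivity
  refine IsLeast.csInf_eq ⟨?_, ?_⟩
  · obtain ⟨z, hz⟩ := UpperHalfPlane.exists_axisForm_eq_zero A (by nlinarith [sq_abs t])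
    refine ⟨z, Real.cosh_injOn dist_nonneg hnonneg ?_⟩
    rw [UpperHalfPlane.cosh_dist_smul_eq_axisForm, hz, hcosh]
    ring
  · rintro _ ⟨z, rfl⟩
    show _ ≤ dist z (A • z)
    rw [← abs_of_nonneg hnonneg, ← abs_of_nonneg dist_nonneg, ← Real.cosh_le_cosh,
      UpperHalfPlane.cosh_dist_smul_eq_axisForm, hcosh]
    exact le_add_of_nonneg_right (by positivity)
end

section
/- There exists a constant C > 0 such that the following holds: for each n, let f be chosen uniformly at random from the fixed-point-free involutions of H_n = Fin(2n) × Fin(3); then the probability that for every nonempty subset S of Fin(2n) with |S| ≤ n, the number of half-edges (v, i) with v ∈ S whose match f(v, i) lies at a vertex outside S is at least C·|S|, tends to 1 as n → ∞. (That is, with probability tending to 1, a random 3-regular graph on 2n vertices has Cheeger constant h(Γ) = inf over edge-cuts E disconnecting Γ into parts A, B of #E / min(#A, #B) greater than C.) -/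
open Filter Topology

/-- The set of half-edges of the Bollobás configuration model on 2n vertices:
three half-edges at each of the 2n vertices. -/
abbrev HalfEdges (n : ℕ) := Fin (2 * n) × Fin 3

/-- The rotation σ(v, j) = (v, j + 1 mod 3), encoding the canonical orientation. -/
def rot (n : ℕ) : Equiv.Perm (HalfEdges n) :=
  Equiv.prodCongr (Equiv.refl (Fin (2 * n))) (finRotate 3)

/-- `f` is a fixed-point-free involution. -/
def IsFPFInvolution {α : Type*} (f : Equiv.Perm α) : Prop :=
  (∀ x, f (f x) = x) ∧ ∀ x, f x ≠ x

/-- The probability, under the uniform measure on fixed-point-free involutions of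
the half-edge set `HalfEdges n`, of the event `P`. -/
noncomputable def probFPF (n : ℕ) (P : Equiv.Perm (HalfEdges n) → Prop) : ℝ :=
  (Nat.card {f : Equiv.Perm (HalfEdges n) // IsFPFInvolution f ∧ P f} : ℝ) /
    (Nat.card {f : Equiv.Perm (HalfEdges n) // IsFPFInvolution f} : ℝ)

/-!
If a set `S` of `s ≤ n` vertices has fewer than `s / 100` outgoing half-edges, then almost all
of its `3s` half-edges are matched among themselves, so some `2u` of them, `u ≈ 3s / 2`, form a
union of matched pairs. A fixed set of `2u` of the `6n` half-edges is such a union with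
probability `C(3n, u) / C(6n, 2u)`, so the union bound over `S` and over these `2u`-sets bounds
the failure probability by `∑ₛ C(2n, s) C(3s, 2u) C(3n, u) / C(6n, 2u)`. Vandermonde gives
`C(2n, s) C(n, d) C(3n, u) ≤ C(3n, u)² ≤ C(6n, 2u)` with `d = u - s ≈ s / 2`, and
`C(3s, 2u) ≤ (11/10)^s` because `3s - 2u ≤ s / 100`; together with `C(n, d) ≥ (n / d)^d` the
`s`-th term is at most `(1331 d / (1000 n))^d`, and these sums tend to `0` by dominated
convergence.
-/

open Equiv Finset

namespace IsFPFInvolution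

variable {α : Type*} {f : Perm α}

theorem apply_iff (hf : IsFPFInvolution f) {p : α → Prop} (hp : ∀ x, p x → p (f x)) (x : α) :
    p (f x) ↔ p x :=
  ⟨fun h => hf.1 x ▸ hp (f x) h, hp x⟩

theorem subtypePerm (hf : IsFPFInvolution f) {p : α → Prop} (h : ∀ x, p (f x) ↔ p x) :
    IsFPFInvolution (f.subtypePerm h) :=
  ⟨fun x => Subtype.ext (hf.1 x), fun x hx => hf.2 x (congrArg Subtype.val hx)⟩

theorem subtypeCongr {p : α → Prop} [DecidablePred p] {g : Perm {x // p x}}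
    {h : Perm {x // ¬ p x}} (hg : IsFPFInvolution g) (hh : IsFPFInvolution h) :
    IsFPFInvolution (g.subtypeCongr h) := by
  constructor
  · intro x
    by_cases hx : p x
    · simp [Perm.subtypeCongr.left_apply _ _ hx, hg.1]
    · simp [Perm.subtypeCongr.right_apply _ _ hx, hh.1]
  · intro x
    by_cases hx : p x
    · simpa [Perm.subtypeCongr.left_apply _ _ hx, Subtype.ext_iff] using hg.2 ⟨x, hx⟩
    · simpa [Perm.subtypeCongr.right_apply _ _ hx, Subtype.ext_iff] using hh.2 ⟨x, hx⟩

-- The slack `+ 1` is free: an invariant set has even cardinality.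
theorem exists_invariant_subset [DecidableEq α]
    (hf : IsFPFInvolution f) {V : Finset α} (hV : ∀ x ∈ V, f x ∈ V) {u : ℕ}
    (hu : 2 * u ≤ #V + 1) : ∃ U ⊆ V, #U = 2 * u ∧ ∀ x ∈ U, f x ∈ U := by
  induction u generalizing V with
  | zero => exact ⟨∅, empty_subset V, rfl, by simp⟩
  | succ u ih =>
    obtain ⟨x, hx⟩ : V.Nonempty := Finset.card_pos.mp (by omega)
    have hpair : {x, f x} ⊆ V :=
      Finset.insert_subset hx (Finset.singleton_subset_iff.mpr (hV x hx))
    have hpair_card : #{x, f x} = 2 := Finset.card_pair (hf.2 x).symm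
    have hW : ∀ z ∈ V \ {x, f x}, f z ∈ V \ {x, f x} := by
      intro z hz
      simp only [Finset.mem_sdiff, Finset.mem_insert, Finset.mem_singleton, not_or] at hz ⊢
      refine ⟨hV z hz.1, fun hzx => hz.2.2 ?_, fun hzx => hz.2.1 (f.injective hzx)⟩
      rw [← hzx, hf.1]
    obtain ⟨U, hUW, hUcard, hUinv⟩ := ih hW (by rw [Finset.card_sdiff_of_subset hpair]; omega)
    refine ⟨{x, f x} ∪ U, Finset.union_subset hpair (hUW.trans Finset.sdiff_subset), ?_, ?_⟩
    · rw [Finset.card_union_of_disjoint (Finset.disjoint_of_subset_right hUW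
        Finset.disjoint_sdiff), hpair_card, hUcard]
      ring
    · intro z hz
      rcases Finset.mem_union.mp hz with hz | hz
      · simp only [Finset.mem_insert, Finset.mem_singleton] at hz
        rcases hz with rfl | rfl <;> simp [hf.1]
      · exact Finset.mem_union_right _ (hUinv z hz)

end IsFPFInvolution

section Counting

variable {α : Type*}

def fpfInvolutionSplitEquiv (p : α → Prop) [DecidablePred p] :
    {f : Perm α // IsFPFInvolution f ∧ ∀ x, p x → p (f x)} ≃
      {g : Perm {x // p x} // IsFPFInvolution g} ×
        {g : Perm {x // ¬ p x} // IsFPFInvolution g} where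
  toFun f :=
    (⟨_, f.2.1.subtypePerm (f.2.1.apply_iff f.2.2)⟩,
      ⟨_, f.2.1.subtypePerm fun x => not_congr (f.2.1.apply_iff f.2.2 x)⟩)
  invFun gh := ⟨_, gh.1.2.subtypeCongr gh.2.2, fun x hx => by
    simpa [Perm.subtypeCongr.left_apply _ _ hx] using (gh.1.1 ⟨x, hx⟩).2⟩
  left_inv f := by
    ext x
    by_cases hx : p x <;> simp [hx]
  right_inv gh := by
    ext <;> simp

theorem card_fpfInvolution_invariant (p : α → Prop) [DecidablePred p] :
    Nat.card {f : Perm α // IsFPFInvolution f ∧ ∀ x, p x → p (f x)} =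
      Nat.card {g : Perm {x // p x} // IsFPFInvolution g} *
        Nat.card {g : Perm {x // ¬ p x} // IsFPFInvolution g} := by
  rw [Nat.card_congr (fpfInvolutionSplitEquiv p), Nat.card_prod]

variable [DecidableEq α]

theorem card_fpfInvolution_of_card_eq_two [Fintype α] (h : Fintype.card α = 2) :
    Nat.card {f : Perm α // IsFPFInvolution f} = 1 := by
  obtain ⟨a, b, hab, hunivab⟩ := Nat.card_eq_two_iff.mp (Nat.card_eq_fintype_card.trans h)
  have hmem (x : α) : x = a ∨ x = b := by
    have hx := Set.mem_univ x
    rwa [← hunivab, Set.mem_insert_iff, Set.mem_singleton_iff] at hx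
  refine Nat.card_eq_one_iff_exists.mpr
    ⟨⟨swap a b, fun x => swap_apply_self a b x, fun x => ?_⟩, fun ⟨f, hf⟩ => ?_⟩
  · rcases hmem x with rfl | rfl <;> simp [hab, hab.symm]
  · have hfa : f a = b := (hmem (f a)).resolve_left (hf.2 a)
    have hfb : f b = a := by rw [← hfa, hf.1]
    ext x
    rcases hmem x with rfl | rfl <;> simp [hfa, hfb]

theorem card_fpfInvolution_apply_eq {x y : α} (hxy : x ≠ y) :
    Nat.card {f : Perm α // IsFPFInvolution f ∧ f x = y} =
      Nat.card {g : Perm {z // z ∉ ({x, y} : Finset α)} // IsFPFInvolution g} := by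
  have hpair (f : Perm α) (hf : IsFPFInvolution f) :
      f x = y ↔ ∀ z, z ∈ ({x, y} : Finset α) → f z ∈ ({x, y} : Finset α) := by
    refine ⟨fun hfx z hz => ?_, fun hinv => ?_⟩
    · rcases Finset.mem_insert.mp hz with rfl | hz
      · simp [hfx]
      · simp [Finset.mem_singleton.mp hz, ← hfx, hf.1]
    · simpa [hf.2 x] using hinv x (by simp)
  rw [Nat.card_congr (Equiv.subtypeEquivRight fun f => and_congr_right (hpair f)),
    card_fpfInvolution_invariant, card_fpfInvolution_of_card_eq_two, one_mul]
  rw [Fintype.card_coe, Finset.card_pair hxy]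

variable [Fintype α]

theorem card_fpfInvolution_mul {m : ℕ} (h : Fintype.card α = 2 * m) :
    Nat.card {f : Perm α // IsFPFInvolution f} * (2 ^ m * m.factorial) = (2 * m).factorial := by
  induction m generalizing α with
  | zero =>
    have : IsEmpty α := Fintype.card_eq_zero_iff.mp h
    have : Unique {f : Perm α // IsFPFInvolution f} :=
      { default := ⟨1, isEmptyElim, isEmptyElim⟩
        uniq := fun f => Subtype.ext (Subsingleton.elim _ _) }
    simp
  | succ m ih =>
    classical
    obtain ⟨x⟩ : Nonempty α := Fintype.card_pos_iff.mp (by omega)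
    have hfiber (y : α) (hy : y ∈ univ.erase x) :
        #{f : Perm α | IsFPFInvolution f ∧ f x = y} * (2 ^ m * m.factorial) =
          (2 * m).factorial := by
      rw [← Fintype.card_subtype, ← Nat.card_eq_fintype_card,
        card_fpfInvolution_apply_eq (Finset.ne_of_mem_erase hy).symm]
      refine ih ?_
      rw [Fintype.card_subtype_compl, Fintype.card_coe, h,
        Finset.card_pair (Finset.ne_of_mem_erase hy).symm]
      omega
    have hsum : Nat.card {f : Perm α // IsFPFInvolution f} =
        ∑ y ∈ univ.erase x, #{f : Perm α | IsFPFInvolution f ∧ f x = y} := by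
      rw [Nat.card_eq_fintype_card, Fintype.card_subtype,
        card_eq_sum_card_fiberwise (f := fun f : Perm α => f x) (t := univ.erase x) fun f hf => by
          simpa using (Finset.mem_filter.mp hf).2.2 x]
      simp only [Finset.filter_filter]
    have hnorm : 2 ^ (m + 1) * (m + 1).factorial = 2 ^ m * m.factorial * (2 * (m + 1)) := by
      rw [pow_succ, Nat.factorial_succ]
      ring
    have hfact : (2 * (m + 1) - 1) * (2 * m).factorial * (2 * (m + 1)) =
        (2 * (m + 1)).factorial := by
      rw [show 2 * (m + 1) = 2 * m + 1 + 1 by ring, Nat.factorial_succ, Nat.factorial_succ,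
        Nat.add_sub_cancel]
      ring
    rw [hnorm, ← mul_assoc, hsum, Finset.sum_mul, Finset.sum_congr rfl hfiber, Finset.sum_const,
      Finset.card_erase_of_mem (Finset.mem_univ x), Finset.card_univ, h, smul_eq_mul, hfact]

theorem card_fpfInvolution_pos {m : ℕ} (h : Fintype.card α = 2 * m) :
    0 < Nat.card {f : Perm α // IsFPFInvolution f} :=
  Nat.pos_of_ne_zero fun h0 => (2 * m).factorial_ne_zero <| by
    rw [← card_fpfInvolution_mul h, h0, zero_mul]

theorem card_fpfInvolution_invariant_mul_choose {U : Finset α} {u N : ℕ} (hU : #U = 2 * u)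
    (hα : Fintype.card α = 2 * N) :
    Nat.card {f : Perm α // IsFPFInvolution f ∧ ∀ x ∈ U, f x ∈ U} * (2 * N).choose (2 * u) =
      Nat.card {f : Perm α // IsFPFInvolution f} * N.choose u := by
  obtain ⟨v, rfl⟩ : ∃ v, N = u + v := Nat.exists_eq_add_of_le <| by
    have := U.card_le_univ
    omega
  have hin : Fintype.card {x // x ∈ U} = 2 * u := by rw [Fintype.card_coe, hU]
  have hout : Fintype.card {x // x ∉ U} = 2 * v := by
    rw [Fintype.card_subtype_compl, hin, hα]
    omega
  have hpos : 0 < 2 ^ u * u.factorial * (2 ^ v * v.factorial) := by positivity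
  refine Nat.eq_of_mul_eq_mul_right hpos ?_
  calc _ = Nat.card {g : Perm {x // x ∈ U} // IsFPFInvolution g} * (2 ^ u * u.factorial) *
          (Nat.card {g : Perm {x // x ∉ U} // IsFPFInvolution g} * (2 ^ v * v.factorial)) *
            (2 * u + 2 * v).choose (2 * u) := by
        rw [card_fpfInvolution_invariant, mul_add]
        ring
    _ = (2 * u + 2 * v).choose (2 * u) * (2 * u).factorial *
          (2 * u + 2 * v - 2 * u).factorial := by
        rw [card_fpfInvolution_mul hin, card_fpfInvolution_mul hout, Nat.add_sub_cancel_left]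
        ring
    _ = Nat.card {f : Perm α // IsFPFInvolution f} * (2 ^ (u + v) * (u + v).factorial) := by
        rw [Nat.choose_mul_factorial_mul_factorial (Nat.le_add_right _ _),
          card_fpfInvolution_mul hα, mul_add]
    _ = _ := by
        rw [← Nat.choose_mul_factorial_mul_factorial (Nat.le_add_right u v),
          Nat.add_sub_cancel_left, pow_add]
        ring

end Counting

theorem Nat.pow_le_pow_mul_choose {n k : ℕ} (h : k ≤ n) : n ^ k ≤ k ^ k * n.choose k := by
  refine Nat.le_of_mul_le_mul_right ?_ k.factorial_pos
  calc n ^ k * k.factorial = ∏ i ∈ range k, n * (k - i) := by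
        rw [Finset.prod_mul_distrib, Finset.prod_const, Finset.card_range,
          ← Nat.descFactorial_eq_prod_range, Nat.descFactorial_self]
    _ ≤ ∏ i ∈ range k, k * (n - i) := by
        refine Finset.prod_le_prod (fun _ _ => Nat.zero_le _) fun i _ => ?_
        rw [Nat.mul_sub, Nat.mul_sub, mul_comm n k]
        exact Nat.sub_le_sub_left (Nat.mul_le_mul_right i h) _
    _ = k ^ k * n.choose k * k.factorial := by
        rw [Finset.prod_mul_distrib, Finset.prod_const, Finset.card_range,
          ← Nat.descFactorial_eq_prod_range, Nat.descFactorial_eq_factorial_mul_choose]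
        ring

theorem Nat.choose_mul_pow_le_succ_pow (m k x : ℕ) : m.choose k * x ^ k ≤ (x + 1) ^ m := by
  rcases le_or_gt k m with hkm | hkm
  · rw [add_pow]
    refine le_trans (le_of_eq ?_) (Finset.single_le_sum (fun j _ => Nat.zero_le _)
      (Finset.mem_range_succ_iff.mpr hkm))
    rw [Nat.cast_id]
    ring
  · simp [Nat.choose_eq_zero_of_lt hkm]

theorem Nat.choose_mul_choose_le_choose_add (a b i j : ℕ) :
    a.choose i * b.choose j ≤ (a + b).choose (i + j) := by
  rw [Nat.add_choose_eq]
  exact Finset.single_le_sum (f := fun p : ℕ × ℕ => a.choose p.1 * b.choose p.2)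
    (fun _ _ => Nat.zero_le _)
    (Finset.HasAntidiagonal.mem_antidiagonal.mpr (rfl : (i, j).1 + (i, j).2 = i + j))

theorem choose_three_mul_le {s k : ℕ} (h : 100 * (3 * s - k) ≤ s) :
    ((3 * s).choose k : ℝ) ≤ (11 / 10) ^ s := by
  rcases le_or_gt k (3 * s) with hk | hk
  swap
  · rw [Nat.choose_eq_zero_of_lt hk, Nat.cast_zero]
    positivity
  have hbinom : ((3 * s).choose k : ℝ) * 100 ^ k ≤ 101 ^ (3 * s) := by
    exact_mod_cast Nat.choose_mul_pow_le_succ_pow (3 * s) k 100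
  have hrest : (100 : ℝ) ^ (3 * s - k) ≤ (21 / 20) ^ s :=
    calc (100 : ℝ) ^ (3 * s - k) ≤ ((21 / 20) ^ 100) ^ (3 * s - k) :=
          pow_le_pow_left₀ (by norm_num) (by norm_num) _
      _ ≤ (21 / 20) ^ s := by
          rw [← pow_mul]
          exact pow_le_pow_right₀ (by norm_num) (by omega)
  calc ((3 * s).choose k : ℝ) ≤ 101 ^ (3 * s) / 100 ^ k := by
        rw [le_div_iff₀ (by positivity)]
        exact hbinom
    _ = ((101 / 100) ^ 3) ^ s * 100 ^ (3 * s - k) := by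
        rw [div_eq_iff (by positivity), mul_assoc, ← pow_add, Nat.sub_add_cancel hk, ← pow_mul,
          ← mul_pow]
        norm_num
    _ ≤ ((101 / 100) ^ 3) ^ s * (21 / 20) ^ s := by gcongr
    _ ≤ (11 / 10) ^ s := by
        rw [← mul_pow]
        exact pow_le_pow_left₀ (by norm_num) (by norm_num) _

theorem choose_ratio_le {n s d : ℕ} (hn : 0 < n) (hs : s ≤ n) (hd : 2 * d ≤ s + 1)
    (hsd : s ≤ 3 * d) (hcut : 100 * (3 * s - 2 * (s + d)) ≤ s) :
    ((2 * n).choose s : ℝ) * ((3 * s).choose (2 * (s + d)) *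
        ((3 * n).choose (s + d) / (6 * n).choose (2 * (s + d)))) ≤
      (1331 * d / (1000 * n)) ^ d := by
  have hdn : d ≤ n := by omega
  have hvandermonde : (2 * n).choose s * (3 * n).choose (s + d) * n.choose d ≤
      (6 * n).choose (2 * (s + d)) :=
    calc _ = (3 * n).choose (s + d) * ((2 * n).choose s * n.choose d) := by ring
      _ ≤ (3 * n).choose (s + d) * (3 * n).choose (s + d) := by
          gcongr
          simpa [show 2 * n + n = 3 * n by ring] using
            Nat.choose_mul_choose_le_choose_add (2 * n) n s d
      _ ≤ (6 * n).choose (2 * (s + d)) := by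
          simpa [show 3 * n + 3 * n = 6 * n by ring, two_mul] using
            Nat.choose_mul_choose_le_choose_add (3 * n) (3 * n) (s + d) (s + d)
  have hpos₁ : (0 : ℝ) < (6 * n).choose (2 * (s + d)) := by
    exact_mod_cast Nat.choose_pos (by omega)
  have hpos₂ : (0 : ℝ) < n.choose d := by exact_mod_cast Nat.choose_pos hdn
  have hratio : ((2 * n).choose s : ℝ) * (3 * n).choose (s + d) / (6 * n).choose (2 * (s + d)) ≤
      (d / n) ^ d := by
    calc _ ≤ 1 / (n.choose d : ℝ) := by
          rw [div_le_div_iff₀ hpos₁ hpos₂, one_mul]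
          exact_mod_cast hvandermonde
      _ ≤ (d / n) ^ d := by
          rw [div_pow, div_le_div_iff₀ hpos₂ (by positivity), one_mul]
          exact_mod_cast Nat.pow_le_pow_mul_choose hdn
  calc _ = ((3 * s).choose (2 * (s + d)) : ℝ) *
        (((2 * n).choose s : ℝ) * (3 * n).choose (s + d) / (6 * n).choose (2 * (s + d))) := by
        ring
    _ ≤ ((11 / 10) ^ 3) ^ d * (d / n) ^ d := by
        gcongr
        calc ((3 * s).choose (2 * (s + d)) : ℝ) ≤ (11 / 10) ^ s := choose_three_mul_le hcut
          _ ≤ ((11 / 10) ^ 3) ^ d := by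
              rw [← pow_mul]
              exact pow_le_pow_right₀ (by norm_num) hsd
    _ = (1331 * d / (1000 * n)) ^ d := by
        rw [← mul_pow]
        congr 1
        field_simp
        ring

theorem tendsto_sum_Icc_pow_zero {d : ℕ → ℕ} (hd : ∀ s, 2 * d s ≤ s + 1) (hsd : ∀ s, s ≤ 3 * d s) :
    Tendsto (fun n : ℕ => ∑ s ∈ Icc 1 n, (1331 * d s / (1000 * n) : ℝ) ^ d s) atTop (𝓝 0) := by
  set ρ : ℕ → ℕ → ℝ := fun n s => (1331 * d s / (1000 * n)) ^ d s
  have hbound (n s : ℕ) (hn : 8 ≤ n) (hs : s ≤ n) : ρ n s ≤ (91 / 100) ^ s := by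
    have hnR : (8 : ℝ) ≤ n := by exact_mod_cast hn
    have hdR : (2 * d s : ℝ) ≤ n + 1 := by exact_mod_cast (hd s).trans (by omega)
    calc ρ n s ≤ (3 / 4) ^ d s := by
          refine pow_le_pow_left₀ (by positivity) ?_ _
          rw [div_le_iff₀ (by positivity)]
          linarith
      _ ≤ ((91 / 100) ^ 3) ^ d s := pow_le_pow_left₀ (by norm_num) (by norm_num) _
      _ ≤ (91 / 100) ^ s := by
          rw [← pow_mul]
          exact pow_le_pow_of_le_one (by norm_num) (by norm_num) (hsd s)
  have hlim (s : ℕ) (hs : 1 ≤ s) : Tendsto (fun n : ℕ => ρ n s) atTop (𝓝 0) := by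
    have hd0 : d s ≠ 0 := by have := hsd s; omega
    have h := (tendsto_const_div_atTop_nhds_zero_nat (1331 * d s / 1000 : ℝ)).pow (d s)
    rw [zero_pow hd0] at h
    refine h.congr fun n => ?_
    simp only [ρ]
    rw [div_div]
  have hsum (n : ℕ) : ∑ s ∈ Icc 1 n, ρ n s = ∑' s, (Icc 1 n : Set ℕ).indicator (ρ n) s :=
    sum_eq_tsum_indicator _ _
  simp only [ρ] at hsum
  rw [funext hsum, ← tsum_zero]
  refine tendsto_tsum_of_dominated_convergence (bound := fun s => (91 / 100 : ℝ) ^ s)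
    (summable_geometric_of_lt_one (by norm_num) (by norm_num)) (fun s => ?_) ?_
  · rcases Nat.eq_zero_or_pos s with rfl | hs
    · simp
    · refine (hlim s hs).congr' ?_
      filter_upwards [eventually_ge_atTop s] with n hsn
      rw [Set.indicator_of_mem (by simpa using ⟨hs, hsn⟩)]
  · filter_upwards [eventually_ge_atTop 8] with n hn s
    by_cases hs : s ∈ Icc 1 n
    · rw [Set.indicator_of_mem (by simpa using hs), Real.norm_of_nonneg (by positivity)]
      exact hbound n s hn (Finset.mem_Icc.mp hs).2
    · rw [Set.indicator_of_notMem (by simpa using hs), norm_zero]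
      positivity

/-- A set of `s` vertices with fewer than `s / 100` outgoing half-edges has at least
`3s - (s - 1) / 100` internal half-edges, closed under the matching, hence `innerPairs s`
internal matched pairs. -/
def innerPairs (s : ℕ) : ℕ := (3 * s - (s - 1) / 100 + 1) / 2

theorem le_innerPairs (s : ℕ) : s ≤ innerPairs s := by
  unfold innerPairs
  omega

theorem two_mul_innerPairs_sub_le (s : ℕ) : 2 * (innerPairs s - s) ≤ s + 1 := by
  unfold innerPairs
  omega

theorem le_three_mul_innerPairs_sub (s : ℕ) : s ≤ 3 * (innerPairs s - s) := by
  unfold innerPairs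
  omega

theorem hundred_mul_sub_two_mul_innerPairs_le (s : ℕ) : 100 * (3 * s - 2 * innerPairs s) ≤ s := by
  unfold innerPairs
  omega

section HalfEdges

variable {n : ℕ}

theorem card_halfEdges (n : ℕ) : Fintype.card (HalfEdges n) = 2 * (3 * n) := by
  simp only [Fintype.card_prod, Fintype.card_fin]
  ring

theorem card_fpfInvolution_halfEdges_pos (n : ℕ) :
    (0 : ℝ) < Nat.card {f : Perm (HalfEdges n) // IsFPFInvolution f} :=
  Nat.cast_pos.mpr (card_fpfInvolution_pos (card_halfEdges n))

theorem card_halfEdges_fst_mem (S : Finset (Fin (2 * n))) :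
    #{x : HalfEdges n | x.1 ∈ S} = 3 * #S := by
  rw [show ({x : HalfEdges n | x.1 ∈ S} : Finset _) = S ×ˢ univ by ext; simp,
    Finset.card_product, Finset.card_univ, Fintype.card_fin, mul_comm]

def outHalfEdges (f : Perm (HalfEdges n)) (S : Finset (Fin (2 * n))) : Finset (HalfEdges n) :=
  {x | x.1 ∈ S ∧ (f x).1 ∉ S}

theorem exists_invariant_of_cut_lt {f : Perm (HalfEdges n)} (hf : IsFPFInvolution f)
    {S : Finset (Fin (2 * n))} (hcut : 100 * #(outHalfEdges f S) < #S) :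
    ∃ U ∈ powersetCard (2 * innerPairs #S) {x : HalfEdges n | x.1 ∈ S}, ∀ x ∈ U, f x ∈ U := by
  set V : Finset (HalfEdges n) := {x | x.1 ∈ S ∧ (f x).1 ∈ S}
  have hV : ∀ x ∈ V, f x ∈ V := fun x hx => by
    simp only [V, Finset.mem_filter, Finset.mem_univ, true_and, hf.1] at hx ⊢
    exact hx.symm
  have hsplit : #V + #(outHalfEdges f S) = 3 * #S := by
    rw [← card_halfEdges_fst_mem, ← Finset.card_filter_add_card_filter_not
      (s := {x : HalfEdges n | x.1 ∈ S}) (fun x => (f x).1 ∈ S)]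
    simp only [V, outHalfEdges, Finset.filter_filter]
  obtain ⟨U, hUV, hUcard, hUinv⟩ :=
    hf.exists_invariant_subset hV (u := innerPairs #S) (by unfold innerPairs; omega)
  refine ⟨U, Finset.mem_powersetCard.mpr ⟨fun x hx => ?_, hUcard⟩, hUinv⟩
  simpa [V] using (Finset.mem_filter.mp (hUV hx)).2.1

namespace probFPF

theorem nonneg (P : Perm (HalfEdges n) → Prop) : 0 ≤ probFPF n P := by
  unfold probFPF
  positivity

theorem mono {P Q : Perm (HalfEdges n) → Prop} (h : ∀ f, IsFPFInvolution f → P f → Q f) :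
    probFPF n P ≤ probFPF n Q := by
  refine div_le_div_of_nonneg_right ?_ (Nat.cast_nonneg _)
  exact_mod_cast Nat.card_le_card_of_injective
    (fun f : {f // IsFPFInvolution f ∧ P f} =>
      (⟨f.1, f.2.1, h f.1 f.2.1 f.2.2⟩ : {f // IsFPFInvolution f ∧ Q f}))
    fun _ _ hfg => Subtype.ext (by simpa using hfg)

theorem not_eq_one_sub (P : Perm (HalfEdges n) → Prop) :
    probFPF n (fun f => ¬ P f) = 1 - probFPF n P := by
  classical
  have hsplit : Nat.card {f : Perm (HalfEdges n) // IsFPFInvolution f ∧ P f} +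
      Nat.card {f : Perm (HalfEdges n) // IsFPFInvolution f ∧ ¬ P f} =
        Nat.card {f : Perm (HalfEdges n) // IsFPFInvolution f} := by
    simp only [Nat.card_eq_fintype_card, Fintype.card_subtype, ← Finset.filter_filter]
    exact Finset.card_filter_add_card_filter_not _
  rw [eq_sub_iff_add_eq', probFPF, probFPF, ← add_div, ← Nat.cast_add, hsplit,
    div_self (card_fpfInvolution_halfEdges_pos n).ne']

theorem exists_mem_le_sum {ι : Type*} (s : Finset ι) (P : ι → Perm (HalfEdges n) → Prop) :
    probFPF n (fun f => ∃ i ∈ s, P i f) ≤ ∑ i ∈ s, probFPF n (P i) := by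
  classical
  simp only [probFPF, ← Finset.sum_div]
  refine div_le_div_of_nonneg_right ?_ (Nat.cast_nonneg _)
  simp only [Nat.card_eq_fintype_card, Fintype.card_subtype]
  norm_cast
  refine (Finset.card_le_card fun f hf => ?_).trans Finset.card_biUnion_le
  obtain ⟨hf, i, hi, hPi⟩ := (Finset.mem_filter.mp hf).2
  exact Finset.mem_biUnion.mpr ⟨i, hi, by simp [hf, hPi]⟩

theorem invariant_eq {U : Finset (HalfEdges n)} {u : ℕ} (hU : #U = 2 * u) :
    probFPF n (fun f => ∀ x ∈ U, f x ∈ U) = (3 * n).choose u / (6 * n).choose (2 * u) := by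
  have hcount := card_fpfInvolution_invariant_mul_choose hU (card_halfEdges n)
  rw [show 2 * (3 * n) = 6 * n by ring] at hcount
  have hchoose : ((6 * n).choose (2 * u) : ℝ) ≠ 0 := by
    refine Nat.cast_ne_zero.mpr (Nat.choose_pos ?_).ne'
    have := U.card_le_univ
    rw [card_halfEdges] at this
    omega
  rw [probFPF, div_eq_div_iff (card_fpfInvolution_halfEdges_pos n).ne' hchoose]
  exact_mod_cast hcount.trans (mul_comm _ _)

theorem cut_lt_le (S : Finset (Fin (2 * n))) :
    probFPF n (fun f => 100 * #(outHalfEdges f S) < #S) ≤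
      (3 * #S).choose (2 * innerPairs #S) *
        ((3 * n).choose (innerPairs #S) / (6 * n).choose (2 * innerPairs #S)) := by
  calc _ ≤ probFPF n (fun f => ∃ U ∈ powersetCard (2 * innerPairs #S)
          {x : HalfEdges n | x.1 ∈ S}, ∀ x ∈ U, f x ∈ U) :=
        mono fun f hf hcut => exists_invariant_of_cut_lt hf hcut
    _ ≤ ∑ U ∈ powersetCard (2 * innerPairs #S) {x : HalfEdges n | x.1 ∈ S},
          probFPF n (fun f => ∀ x ∈ U, f x ∈ U) := exists_mem_le_sum _ _
    _ = _ := by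
        rw [Finset.sum_congr rfl fun U hU => invariant_eq (Finset.mem_powersetCard.mp hU).2,
          Finset.sum_const, Finset.card_powersetCard, card_halfEdges_fst_mem, nsmul_eq_mul]

theorem exists_cut_lt_le (n : ℕ) :
    probFPF n (fun f => ∃ S : Finset (Fin (2 * n)), S.Nonempty ∧ #S ≤ n ∧
        100 * #(outHalfEdges f S) < #S) ≤
      ∑ s ∈ Icc 1 n, ((2 * n).choose s : ℝ) * ((3 * s).choose (2 * innerPairs s) *
        ((3 * n).choose (innerPairs s) / (6 * n).choose (2 * innerPairs s))) := by
  calc _ ≤ probFPF n (fun f => ∃ s ∈ Icc 1 n, ∃ S ∈ powersetCard s (univ : Finset (Fin (2 * n))),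
          100 * #(outHalfEdges f S) < #S) :=
        mono fun f _ ⟨S, hS, hSn, hcut⟩ => ⟨#S, Finset.mem_Icc.mpr ⟨hS.card_pos, hSn⟩, S,
          Finset.mem_powersetCard.mpr ⟨Finset.subset_univ S, rfl⟩, hcut⟩
    _ ≤ ∑ s ∈ Icc 1 n, ∑ S ∈ powersetCard s (univ : Finset (Fin (2 * n))),
          probFPF n (fun f => 100 * #(outHalfEdges f S) < #S) :=
        (exists_mem_le_sum _ _).trans (Finset.sum_le_sum fun s _ => exists_mem_le_sum _ _)
    _ ≤ _ := by
        gcongr with s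
        refine (Finset.sum_le_sum fun S _ => cut_lt_le S).trans_eq ?_
        rw [Finset.sum_congr rfl fun S hS => by rw [(Finset.mem_powersetCard.mp hS).2],
          Finset.sum_const, Finset.card_powersetCard, Finset.card_univ, Fintype.card_fin,
          nsmul_eq_mul]

theorem exists_cut_lt_le_sum_pow (hn : 0 < n) :
    probFPF n (fun f => ∃ S : Finset (Fin (2 * n)), S.Nonempty ∧ #S ≤ n ∧
        100 * #(outHalfEdges f S) < #S) ≤
      ∑ s ∈ Icc 1 n, (1331 * (innerPairs s - s : ℕ) / (1000 * n) : ℝ) ^ (innerPairs s - s) := by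
  refine (exists_cut_lt_le n).trans (Finset.sum_le_sum fun s hs => ?_)
  have hu := Nat.add_sub_cancel' (le_innerPairs s)
  have := choose_ratio_le hn (Finset.mem_Icc.mp hs).2 (two_mul_innerPairs_sub_le s)
    (le_three_mul_innerPairs_sub s) (by rw [hu]; exact hundred_mul_sub_two_mul_innerPairs_le s)
  rwa [hu] at this

end probFPF

end HalfEdges

/-- There is a constant C > 0 such that, with probability tending
to 1 as n → ∞, a uniformly random fixed-point-free involution f of the 6n
half-edges has the property that every nonempty vertex set S with |S| ≤ n has at
least C·|S| half-edges at vertices of S matched by f to half-edges at vertices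
outside S (i.e., the random 3-regular graph has Cheeger constant > C). -/
theorem prob_cheeger_constant_bounded_below :
    ∃ C > (0 : ℝ),
      Tendsto
        (fun n => probFPF n (fun f =>
          ∀ S : Finset (Fin (2 * n)), S.Nonempty → S.card ≤ n →
            C * S.card ≤
              ((Finset.univ.filter
                  (fun x : HalfEdges n => x.1 ∈ S ∧ (f x).1 ∉ S)).card : ℝ)))
        atTop (𝓝 1) := by
  refine ⟨1 / 100, by norm_num, ?_⟩
  have hgood (n : ℕ) : (fun f : Perm (HalfEdges n) => ∀ S : Finset (Fin (2 * n)), S.Nonempty →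
      #S ≤ n → 1 / 100 * (#S : ℝ) ≤ #{x : HalfEdges n | x.1 ∈ S ∧ (f x).1 ∉ S}) =
        fun f => ¬ ∃ S : Finset (Fin (2 * n)), S.Nonempty ∧ #S ≤ n ∧
          100 * #(outHalfEdges f S) < #S := by
    simp only [outHalfEdges, not_exists, not_and, not_lt, ← Nat.cast_le (α := ℝ), Nat.cast_mul,
      Nat.cast_ofNat]
    funext f
    refine propext (forall₃_congr fun S _ _ => ?_)
    constructor <;> intro h <;> linarith
  have hbad : Tendsto (fun n => probFPF n fun f => ∃ S : Finset (Fin (2 * n)), S.Nonempty ∧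
      #S ≤ n ∧ 100 * #(outHalfEdges f S) < #S) atTop (𝓝 0) :=
    squeeze_zero' (Eventually.of_forall fun n => probFPF.nonneg _)
      ((eventually_gt_atTop 0).mono fun n => probFPF.exists_cut_lt_le_sum_pow)
      (tendsto_sum_Icc_pow_zero two_mul_innerPairs_sub_le le_three_mul_innerPairs_sub)
  simp_rw [hgood, probFPF.not_eq_one_sub]
  simpa using (tendsto_const_nhds (x := (1 : ℝ))).sub hbad
end
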